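/- If G and H act compatibly on each other and G (or H) is solvable-by-finite, then the non-abelian tensor product G ⊗ H is solvable-by-finite; similarly if G (or H) is nilpotent-by-finite, then G ⊗ H is nilpotent-by-finite. -/

import Mathlib

universe u

/-- Two groups acting on each other (and on themselves by conjugation) with
compatible actions, in the sense of Brown–Loday. -/
structure CompatibleActions (G H : Type u) [Group G] [Group H] where
  actG : G →* MulAut H
  actH : H →* MulAut G
  compat_left : ∀ (g g' : G) (h : H),
    actH (actG g h) g' = g * actH h (g⁻¹ * g' * g) * g⁻¹
  compat_right : ∀ (g : G) (h h' : H),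
    actG (actH h g) h' = h * actG g (h⁻¹ * h' * h) * h⁻¹

variable {G H : Type u} [Group G] [Group H]

/-- The defining relators of the non-abelian tensor product `G ⊗ H`. -/
def tensorRels (c : CompatibleActions G H) : Set (FreeGroup (G × H)) :=
  {r | ∃ g g' h, r = FreeGroup.of (g * g', h) *
      (FreeGroup.of (g * g' * g⁻¹, c.actG g h) * FreeGroup.of (g, h))⁻¹} ∪
  {r | ∃ g h h', r = FreeGroup.of (g, h * h') *
      (FreeGroup.of (g, h) * FreeGroup.of (c.actH h g, h * h' * h⁻¹))⁻¹}

/-- The non-abelian tensor product `G ⊗ H` of groups acting compatibly on each other. -/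
def NATensor (c : CompatibleActions G H) : Type u :=
  PresentedGroup (tensorRels c)

instance (c : CompatibleActions G H) : Group (NATensor c) := by
  unfold NATensor; infer_instance

/-- The generator `g ⊗ h` of the non-abelian tensor product. -/
def tmul (c : CompatibleActions G H) (g : G) (h : H) : NATensor c :=
  PresentedGroup.of (g, h)

/-- Conjugation actions of a group on itself form compatible actions. -/
def conjActions (G : Type u) [Group G] : CompatibleActions G G where
  actG := MulAut.conj
  actH := MulAut.conj
  compat_left := by intros; simp only [MulAut.conj_apply]; group
  compat_right := by intros; simp only [MulAut.conj_apply]; group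

/-- The non-abelian tensor square `G ⊗ G`. -/
def TensorSquare (G : Type u) [Group G] : Type u := NATensor (conjActions G)

instance (G : Type u) [Group G] : Group (TensorSquare G) := by
  unfold TensorSquare; infer_instance

/-- The derivative subgroup `D_H(G) = ⟨g ⬝ (ʰg)⁻¹ : g ∈ G, h ∈ H⟩ ≤ G`. -/
def derivSubgroupG (c : CompatibleActions G H) : Subgroup G :=
  Subgroup.closure {x | ∃ (g : G) (h : H), x = g * (c.actH h g)⁻¹}

/-- The derivative subgroup `D_G(H) = ⟨h ⬝ (ᵍh)⁻¹ : g ∈ G, h ∈ H⟩ ≤ H`. -/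
def derivSubgroupH (c : CompatibleActions G H) : Subgroup H :=
  Subgroup.closure {x | ∃ (g : G) (h : H), x = h * (c.actG g h)⁻¹}
/-- A group is supersolvable if it has a finite chain of subgroups, each normal in the
whole group, reaching from `⊥` to `⊤`, with all successive factors cyclic. -/
def IsSupersolvable (G : Type u) [Group G] : Prop :=
  ∃ (n : ℕ) (s : ℕ → Subgroup G), s 0 = ⊥ ∧ s n = ⊤ ∧
    (∀ i, s i ≤ s (i + 1)) ∧ (∀ i, (s i).Normal) ∧
    ∀ i, ∃ x ∈ s (i + 1), ∀ y ∈ s (i + 1), ∃ k : ℤ, (x ^ k)⁻¹ * y ∈ s i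

/-- A group is Noetherian if all of its subgroups are finitely generated. -/
def IsNoetherianGroup (G : Type u) [Group G] : Prop :=
  ∀ K : Subgroup G, K.FG

/-- A group is solvable-by-finite if it has a solvable normal subgroup of finite index. -/
def SolvableByFinite (G : Type u) [Group G] : Prop :=
  ∃ S : Subgroup G, S.Normal ∧ IsSolvable S ∧ Finite (G ⧸ S)

/-- A group is nilpotent-by-finite if it has a nilpotent normal subgroup of finite index. -/
def NilpotentByFinite (G : Type u) [Group G] : Prop :=
  ∃ S : Subgroup G, S.Normal ∧ Group.IsNilpotent S ∧ Finite (G ⧸ S)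

/-- The class `𝒞` of groups which are an extension of a finite group by a finitely
generated non-abelian free group, or an extension of a finitely generated non-abelian
free group by a finite group. -/
def ClassC (G : Type u) [Group G] : Prop :=
  (∃ (n : ℕ) (π : G →* FreeGroup (Fin n)), 2 ≤ n ∧ Function.Surjective π ∧
      Finite π.ker) ∨
  (∃ (F : Subgroup G) (n : ℕ), F.Normal ∧ 2 ≤ n ∧ Nonempty (F ≃* FreeGroup (Fin n)) ∧
      Finite (G ⧸ F))

/-- `n`-chains of the inhomogeneous bar complex computing the integral homology of `G`:
the free `ℤ`-module on `n`-tuples of elements of `G`. -/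
def barChains (G : Type u) [Group G] (n : ℕ) : Type u := (Fin n → G) →₀ ℤ

noncomputable instance (G : Type u) [Group G] (n : ℕ) : AddCommGroup (barChains G n) := by
  unfold barChains; infer_instance

noncomputable instance (G : Type u) [Group G] (n : ℕ) : Module ℤ (barChains G n) := by
  unfold barChains; infer_instance

/-- The boundary map `∂ : C_{n+1} → C_n` of the inhomogeneous bar complex (with trivial
`ℤ` coefficients). -/
noncomputable def barBoundary (G : Type u) [Group G] (n : ℕ) :
    barChains G (n + 1) →ₗ[ℤ] barChains G n :=
  Finsupp.lift (barChains G n) ℤ (Fin (n + 1) → G) fun g =>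
    Finsupp.single (Fin.tail g) 1
    + (∑ i : Fin n, ((-1 : ℤ) ^ ((i : ℕ) + 1)) •
        Finsupp.single (fun j : Fin n =>
          if (j : ℕ) < (i : ℕ) then g (Fin.castSucc j)
          else if (j : ℕ) = (i : ℕ) then g (Fin.castSucc j) * g (Fin.succ j)
          else g (Fin.succ j)) (1 : ℤ))
    + ((-1 : ℤ) ^ (n + 1)) • Finsupp.single (Fin.init g) 1

/-- The `n`-th integral homology group `H_n(G)` (for `n ≥ 1`), computed from the
inhomogeneous bar complex: `ker ∂ₙ / im ∂ₙ₊₁`. -/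
noncomputable def GroupHomology (G : Type u) [Group G] (n : ℕ) : Type u :=
  ↥(LinearMap.ker (barBoundary G (n - 1))) ⧸
    Submodule.comap (LinearMap.ker (barBoundary G (n - 1))).subtype
      (LinearMap.range (barBoundary G (n - 1 + 1)))
namespace NATensorAux

variable {G H : Type u} [Group G] [Group H] (c : CompatibleActions G H)

lemma relator_eq_one (r : FreeGroup (G × H)) (hr : r ∈ tensorRels c) :
    PresentedGroup.mk (tensorRels c) r = 1 :=
  (QuotientGroup.eq_one_iff r).mpr (Subgroup.subset_normalClosure hr)

lemma rel1 (g g' : G) (h : H) :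
    tmul c (g * g') h = tmul c (g * g' * g⁻¹) (c.actG g h) * tmul c g h := by
  have h1 := relator_eq_one c _ (Or.inl ⟨g, g', h, rfl⟩)
  rw [map_mul, map_inv, map_mul, mul_inv_eq_one] at h1
  exact h1

lemma rel2 (g : G) (h h' : H) :
    tmul c g (h * h') = tmul c g h * tmul c (c.actH h g) (h * h' * h⁻¹) := by
  have h1 := relator_eq_one c _ (Or.inr ⟨g, h, h', rfl⟩)
  rw [map_mul, map_inv, map_mul, mul_inv_eq_one] at h1
  exact h1

lemma split1 (x u : G) (w : H) :
    tmul c (x * u) w = tmul c x (c.actG u w) * tmul c u w := by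
  have h1 := rel1 c u (u⁻¹ * x * u) w
  rw [show u * (u⁻¹ * x * u) = x * u by group,
      show x * u * u⁻¹ = x by group] at h1
  exact h1

lemma split2 (g : G) (w y : H) :
    tmul c g (w * y) = tmul c g y * tmul c (c.actH y g) w := by
  have h1 := rel2 c g y (y⁻¹ * w * y)
  rw [show y * (y⁻¹ * w * y) = w * y by group,
      show w * y * y⁻¹ = w by group] at h1
  exact h1

end NATensorAux
namespace NATensorAux
section Part2
variable {G H : Type u} [Group G] [Group H] (c : CompatibleActions G H)

lemma lift_relator {K : Type*} [Group K] (f : G × H → K)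
    (h1 : ∀ g g' h, f (g * g', h) = f (g * g' * g⁻¹, c.actG g h) * f (g, h))
    (h2 : ∀ g h h', f (g, h * h') = f (g, h) * f (c.actH h g, h * h' * h⁻¹)) :
    ∀ r ∈ tensorRels c, FreeGroup.lift f r = 1 := by
  rintro r (⟨g, g', h, rfl⟩ | ⟨g, h, h', rfl⟩)
  · simp only [map_mul, map_inv, FreeGroup.lift_apply_of]
    rw [h1 g g' h]
    group
  · simp only [map_mul, map_inv, FreeGroup.lift_apply_of]
    rw [h2 g h h']
    group

lemma phiG_aux : ∀ r ∈ tensorRels c,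
    FreeGroup.lift (fun p : G × H => p.1 * (c.actH p.2 p.1)⁻¹) r = 1 := by
  apply lift_relator
  · intro g g' h
    dsimp only
    rw [c.compat_left g (g * g' * g⁻¹) h,
        show g⁻¹ * (g * g' * g⁻¹) * g = g' by group]
    simp only [map_mul]
    group
  · intro g h h'
    dsimp only
    rw [show (c.actH (h * h' * h⁻¹)) ((c.actH h) g) = (c.actH (h * h')) g by
      rw [← MulAut.mul_apply, ← map_mul]; congr 1; group]
    group

/-- The crossed module map `G ⊗ H → G`. -/
def phiG : NATensor c →* G := PresentedGroup.toGroup (phiG_aux c)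

@[simp] lemma phiG_tmul (g : G) (h : H) :
    phiG c (tmul c g h) = g * (c.actH h g)⁻¹ :=
  PresentedGroup.toGroup.of (phiG_aux c)

lemma phiH_aux : ∀ r ∈ tensorRels c,
    FreeGroup.lift (fun p : G × H => c.actG p.1 p.2 * p.2⁻¹) r = 1 := by
  apply lift_relator
  · intro g g' h
    dsimp only
    rw [show (c.actG (g * g' * g⁻¹)) ((c.actG g) h) = (c.actG (g * g')) h by
      rw [← MulAut.mul_apply, ← map_mul]; congr 1; group]
    group
  · intro g h h'
    dsimp only
    rw [c.compat_right g h (h * h' * h⁻¹),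
        show h⁻¹ * (h * h' * h⁻¹) * h = h' by group]
    simp only [map_mul]
    group

/-- The crossed module map `G ⊗ H → H`. -/
def phiH : NATensor c →* H := PresentedGroup.toGroup (phiH_aux c)

@[simp] lemma phiH_tmul (g : G) (h : H) :
    phiH c (tmul c g h) = c.actG g h * h⁻¹ :=
  PresentedGroup.toGroup.of (phiH_aux c)

end Part2
end NATensorAux
namespace NATensorAux
section Part3
variable {G H : Type u} [Group G] [Group H] (c : CompatibleActions G H)

lemma chi0_aux (b : G) : ∀ r ∈ tensorRels c,
    FreeGroup.lift (fun p : G × H => tmul c (b * p.1 * b⁻¹) (c.actG b p.2)) r = 1 := by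
  apply lift_relator
  · intro g g' h
    dsimp only
    have h1 := rel1 c (b * g * b⁻¹) (b * g' * b⁻¹) (c.actG b h)
    rw [show b * g * b⁻¹ * (b * g' * b⁻¹) = b * (g * g') * b⁻¹ by group] at h1
    rw [show b * (g * g') * b⁻¹ * (b * g * b⁻¹)⁻¹ = b * (g * g' * g⁻¹) * b⁻¹ by group] at h1
    rw [show (c.actG (b * g * b⁻¹)) ((c.actG b) h) = (c.actG b) ((c.actG g) h) by
      rw [← MulAut.mul_apply, ← MulAut.mul_apply, ← map_mul, ← map_mul]; congr 2; group] at h1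
    exact h1
  · intro g h h'
    dsimp only
    have h1 := rel2 c (b * g * b⁻¹) (c.actG b h) (c.actG b h')
    rw [show (c.actG b) h * (c.actG b) h' = (c.actG b) (h * h') by rw [map_mul]] at h1
    rw [show (c.actG b) (h * h') * ((c.actG b) h)⁻¹ = (c.actG b) (h * h' * h⁻¹) by
      simp only [map_mul, map_inv]] at h1
    rw [show (c.actH ((c.actG b) h)) (b * g * b⁻¹) = b * (c.actH h) g * b⁻¹ by
      rw [c.compat_left b (b * g * b⁻¹) h, show b⁻¹ * (b * g * b⁻¹) * b = g by group]] at h1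
    exact h1

lemma rho0_aux (k : H) : ∀ r ∈ tensorRels c,
    FreeGroup.lift (fun p : G × H => tmul c (c.actH k p.1) (k * p.2 * k⁻¹)) r = 1 := by
  apply lift_relator
  · intro g g' h
    dsimp only
    have h1 := rel1 c (c.actH k g) (c.actH k g') (k * h * k⁻¹)
    rw [show (c.actH k) g * (c.actH k) g' = (c.actH k) (g * g') by rw [map_mul]] at h1
    rw [show (c.actH k) (g * g') * ((c.actH k) g)⁻¹ = (c.actH k) (g * g' * g⁻¹) by
      simp only [map_mul, map_inv]] at h1
    rw [show (c.actG ((c.actH k) g)) (k * h * k⁻¹) = k * (c.actG g) h * k⁻¹ by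
      rw [c.compat_right g k (k * h * k⁻¹), show k⁻¹ * (k * h * k⁻¹) * k = h by group]] at h1
    exact h1
  · intro g h h'
    dsimp only
    have h1 := rel2 c (c.actH k g) (k * h * k⁻¹) (k * h' * k⁻¹)
    rw [show k * h * k⁻¹ * (k * h' * k⁻¹) = k * (h * h') * k⁻¹ by group] at h1
    rw [show k * (h * h') * k⁻¹ * (k * h * k⁻¹)⁻¹ = k * (h * h' * h⁻¹) * k⁻¹ by group] at h1
    rw [show (c.actH (k * h * k⁻¹)) ((c.actH k) g) = (c.actH k) ((c.actH h) g) by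
      rw [← MulAut.mul_apply, ← MulAut.mul_apply, ← map_mul, ← map_mul]; congr 2; group] at h1
    exact h1

/-- Action of an element of `G` on the tensor product, as an endomorphism. -/
def chi0 (b : G) : NATensor c →* NATensor c := PresentedGroup.toGroup (chi0_aux c b)

@[simp] lemma chi0_tmul (b : G) (g : G) (h : H) :
    chi0 c b (tmul c g h) = tmul c (b * g * b⁻¹) (c.actG b h) :=
  PresentedGroup.toGroup.of (chi0_aux c b)

/-- Action of an element of `H` on the tensor product, as an endomorphism. -/
def rho0 (k : H) : NATensor c →* NATensor c := PresentedGroup.toGroup (rho0_aux c k)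

@[simp] lemma rho0_tmul (k : H) (g : G) (h : H) :
    rho0 c k (tmul c g h) = tmul c (c.actH k g) (k * h * k⁻¹) :=
  PresentedGroup.toGroup.of (rho0_aux c k)

lemma chi0_comp (b₁ b₂ : G) :
    (chi0 c b₁).comp (chi0 c b₂) = chi0 c (b₁ * b₂) := by
  apply PresentedGroup.ext
  rintro ⟨g, h⟩
  show chi0 c b₁ (chi0 c b₂ (tmul c g h)) = chi0 c (b₁ * b₂) (tmul c g h)
  rw [chi0_tmul, chi0_tmul, chi0_tmul]
  rw [show b₁ * (b₂ * g * b₂⁻¹) * b₁⁻¹ = b₁ * b₂ * g * (b₁ * b₂)⁻¹ by group]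
  rw [show (c.actG b₁) ((c.actG b₂) h) = (c.actG (b₁ * b₂)) h by
    rw [← MulAut.mul_apply, ← map_mul]]

lemma chi0_one : chi0 c 1 = MonoidHom.id (NATensor c) := by
  apply PresentedGroup.ext
  rintro ⟨g, h⟩
  show chi0 c 1 (tmul c g h) = tmul c g h
  rw [chi0_tmul]
  simp

lemma rho0_comp (k₁ k₂ : H) :
    (rho0 c k₁).comp (rho0 c k₂) = rho0 c (k₁ * k₂) := by
  apply PresentedGroup.ext
  rintro ⟨g, h⟩
  show rho0 c k₁ (rho0 c k₂ (tmul c g h)) = rho0 c (k₁ * k₂) (tmul c g h)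
  rw [rho0_tmul, rho0_tmul, rho0_tmul]
  rw [show k₁ * (k₂ * h * k₂⁻¹) * k₁⁻¹ = k₁ * k₂ * h * (k₁ * k₂)⁻¹ by group]
  rw [show (c.actH k₁) ((c.actH k₂) g) = (c.actH (k₁ * k₂)) g by
    rw [← MulAut.mul_apply, ← map_mul]]

lemma rho0_one : rho0 c 1 = MonoidHom.id (NATensor c) := by
  apply PresentedGroup.ext
  rintro ⟨g, h⟩
  show rho0 c 1 (tmul c g h) = tmul c g h
  rw [rho0_tmul]
  simp

/-- The action of `G` on the tensor product. -/
def chi : G →* MulAut (NATensor c) where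
  toFun b :=
    { toFun := chi0 c b
      invFun := chi0 c b⁻¹
      left_inv := fun x => by
        have h := chi0_comp c b⁻¹ b
        rw [inv_mul_cancel, chi0_one] at h
        exact DFunLike.congr_fun h x
      right_inv := fun x => by
        have h := chi0_comp c b b⁻¹
        rw [mul_inv_cancel, chi0_one] at h
        exact DFunLike.congr_fun h x
      map_mul' := map_mul _ }
  map_one' := by
    ext x
    exact DFunLike.congr_fun (chi0_one c) x
  map_mul' := fun a b => by
    ext x
    exact (DFunLike.congr_fun (chi0_comp c a b) x).symm

@[simp] lemma chi_tmul (b : G) (g : G) (h : H) :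
    chi c b (tmul c g h) = tmul c (b * g * b⁻¹) (c.actG b h) :=
  chi0_tmul c b g h

/-- The action of `H` on the tensor product. -/
def rho : H →* MulAut (NATensor c) where
  toFun k :=
    { toFun := rho0 c k
      invFun := rho0 c k⁻¹
      left_inv := fun x => by
        have h := rho0_comp c k⁻¹ k
        rw [inv_mul_cancel, rho0_one] at h
        exact DFunLike.congr_fun h x
      right_inv := fun x => by
        have h := rho0_comp c k k⁻¹
        rw [mul_inv_cancel, rho0_one] at h
        exact DFunLike.congr_fun h x
      map_mul' := map_mul _ }
  map_one' := by
    ext x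
    exact DFunLike.congr_fun (rho0_one c) x
  map_mul' := fun a b => by
    ext x
    exact (DFunLike.congr_fun (rho0_comp c a b) x).symm

@[simp] lemma rho_tmul (k : H) (g : G) (h : H) :
    rho c k (tmul c g h) = tmul c (c.actH k g) (k * h * k⁻¹) :=
  rho0_tmul c k g h

end Part3
end NATensorAux
namespace NATensorAux
section Part4
variable {G H : Type u} [Group G] [Group H] (c : CompatibleActions G H)

lemma Zraw (g u : G) (h v : H) :
    tmul c u h * tmul c (c.actH h g) (c.actG (c.actH h u) v)
      = tmul c (c.actH (c.actG u h) g) (c.actG u v) * tmul c u h := by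
  have e1 : tmul c (g * u) (v * h)
      = tmul c g (c.actG u h) * (tmul c u h *
          (tmul c (c.actH h g) (c.actG (c.actH h u) v) * tmul c (c.actH h u) v)) := by
    rw [split2 c (g * u) v h, split1 c g u h,
        show (c.actH h) (g * u) = c.actH h g * c.actH h u from map_mul _ _ _,
        split1 c (c.actH h g) (c.actH h u) v]
    simp only [mul_assoc]
  have e2 : tmul c (g * u) (v * h)
      = tmul c g (c.actG u h) * (tmul c (c.actH (c.actG u h) g) (c.actG u v) *
          (tmul c u h * tmul c (c.actH h u) v)) := by
    rw [split1 c g u (v * h),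
        show (c.actG u) (v * h) = c.actG u v * c.actG u h from map_mul _ _ _,
        split2 c g (c.actG u v) (c.actG u h), split2 c u v h]
    simp only [mul_assoc]
  have e3 := mul_left_cancel (e1.symm.trans e2)
  rw [← mul_assoc, ← mul_assoc] at e3
  exact mul_right_cancel e3

lemma tmul_conj_G (u a : G) (h m : H) :
    tmul c u h * tmul c a m * (tmul c u h)⁻¹
      = tmul c (u * ((c.actH h) u)⁻¹ * a * (u * ((c.actH h) u)⁻¹)⁻¹)
          (c.actG (u * ((c.actH h) u)⁻¹) m) := by
  have z := Zraw c ((c.actH h⁻¹) a) u h ((c.actG ((c.actH h) u)⁻¹) m)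
  rw [show (c.actH h) ((c.actH h⁻¹) a) = a by
        rw [← MulAut.mul_apply, ← map_mul, mul_inv_cancel, map_one, MulAut.one_apply]] at z
  rw [show (c.actG ((c.actH h) u)) ((c.actG ((c.actH h) u)⁻¹) m) = m by
        rw [← MulAut.mul_apply, ← map_mul, mul_inv_cancel, map_one, MulAut.one_apply]] at z
  rw [show (c.actG u) ((c.actG ((c.actH h) u)⁻¹) m) = (c.actG (u * ((c.actH h) u)⁻¹)) m by
        rw [← MulAut.mul_apply, ← map_mul]] at z
  rw [show (c.actH ((c.actG u) h)) ((c.actH h⁻¹) a)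
        = u * ((c.actH h) u)⁻¹ * a * (u * ((c.actH h) u)⁻¹)⁻¹ by
      rw [c.compat_left u ((c.actH h⁻¹) a) h]
      simp only [map_mul, map_inv]
      rw [MulAut.apply_inv_self]
      group] at z
  rw [z, mul_inv_cancel_right]

lemma Z2raw (g u : G) (v h : H) :
    tmul c (c.actH (c.actG g v) u) (c.actG g h) * tmul c g v
      = tmul c g v * tmul c (c.actH v u) (c.actG (c.actH v g) h) := by
  have e1 : tmul c (u * g) (h * v)
      = tmul c u (c.actG g v) * (tmul c (c.actH (c.actG g v) u) (c.actG g h) *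
          (tmul c g v * tmul c (c.actH v g) h)) := by
    rw [split1 c u g (h * v),
        show (c.actG g) (h * v) = c.actG g h * c.actG g v from map_mul _ _ _,
        split2 c u (c.actG g h) (c.actG g v), split2 c g h v]
    simp only [mul_assoc]
  have e2 : tmul c (u * g) (h * v)
      = tmul c u (c.actG g v) * (tmul c g v *
          (tmul c (c.actH v u) (c.actG (c.actH v g) h) * tmul c (c.actH v g) h)) := by
    rw [split2 c (u * g) h v, split1 c u g v,
        show (c.actH v) (u * g) = c.actH v u * c.actH v g from map_mul _ _ _,
        split1 c (c.actH v u) (c.actH v g) h]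
    simp only [mul_assoc]
  have e3 := mul_left_cancel (e1.symm.trans e2)
  rw [← mul_assoc, ← mul_assoc] at e3
  exact mul_right_cancel e3

lemma tmul_conj_H (g a : G) (v m : H) :
    tmul c g v * tmul c a m * (tmul c g v)⁻¹
      = tmul c (c.actH ((c.actG g) v * v⁻¹) a)
          ((c.actG g) v * v⁻¹ * m * ((c.actG g) v * v⁻¹)⁻¹) := by
  have z := Z2raw c g ((c.actH v⁻¹) a) v ((c.actG ((c.actH v) g)⁻¹) m)
  rw [show (c.actH v) ((c.actH v⁻¹) a) = a by
        rw [← MulAut.mul_apply, ← map_mul, mul_inv_cancel, map_one, MulAut.one_apply]] at z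
  rw [show (c.actG ((c.actH v) g)) ((c.actG ((c.actH v) g)⁻¹) m) = m by
        rw [← MulAut.mul_apply, ← map_mul, mul_inv_cancel, map_one, MulAut.one_apply]] at z
  rw [show (c.actH ((c.actG g) v)) ((c.actH v⁻¹) a) = (c.actH ((c.actG g) v * v⁻¹)) a by
        rw [← MulAut.mul_apply, ← map_mul]] at z
  have key : (c.actG g) ((c.actG ((c.actH v) g)⁻¹) m)
      = (c.actG g) v * v⁻¹ * m * ((c.actG g) v * v⁻¹)⁻¹ := by
    have h1 := c.compat_right g v ((c.actG ((c.actH v) g)⁻¹) m)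
    rw [show (c.actG ((c.actH v) g)) ((c.actG ((c.actH v) g)⁻¹) m) = m by
        rw [← MulAut.mul_apply, ← map_mul, mul_inv_cancel, map_one, MulAut.one_apply]] at h1
    rw [show (c.actG g) (v⁻¹ * ((c.actG ((c.actH v) g)⁻¹) m) * v)
          = ((c.actG g) v)⁻¹ * (c.actG g) ((c.actG ((c.actH v) g)⁻¹) m) * (c.actG g) v by
        simp only [map_mul, map_inv]] at h1
    generalize hX : (c.actG g) ((c.actG ((c.actH v) g)⁻¹) m) = X at h1 ⊢
    rw [h1]
    group
  rw [key] at z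
  rw [← z, mul_inv_cancel_right]

end Part4
end NATensorAux
namespace NATensorAux
section Part5
variable {G H : Type u} [Group G] [Group H] (c : CompatibleActions G H)

lemma conj_eq_chi_phiG :
    (MulAut.conj : NATensor c →* MulAut (NATensor c)) = (chi c).comp (phiG c) := by
  apply PresentedGroup.ext
  rintro ⟨u, h⟩
  have hmon : (MulAut.conj (tmul c u h)).toMonoidHom
      = (chi c (u * ((c.actH h) u)⁻¹)).toMonoidHom := by
    apply PresentedGroup.ext
    rintro ⟨a, m⟩
    show MulAut.conj (tmul c u h) (tmul c a m) = chi c (u * ((c.actH h) u)⁻¹) (tmul c a m)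
    rw [MulAut.conj_apply, chi_tmul]
    exact tmul_conj_G c u a h m
  have hEq : MulAut.conj (tmul c u h) = chi c (u * ((c.actH h) u)⁻¹) :=
    MulEquiv.toMonoidHom_injective hmon
  show MulAut.conj (tmul c u h) = chi c (phiG c (tmul c u h))
  rw [phiG_tmul, hEq]

lemma conj_eq_rho_phiH :
    (MulAut.conj : NATensor c →* MulAut (NATensor c)) = (rho c).comp (phiH c) := by
  apply PresentedGroup.ext
  rintro ⟨g, v⟩
  have hmon : (MulAut.conj (tmul c g v)).toMonoidHom
      = (rho c ((c.actG g) v * v⁻¹)).toMonoidHom := by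
    apply PresentedGroup.ext
    rintro ⟨a, m⟩
    show MulAut.conj (tmul c g v) (tmul c a m) = rho c ((c.actG g) v * v⁻¹) (tmul c a m)
    rw [MulAut.conj_apply, rho_tmul]
    exact tmul_conj_H c g a v m
  have hEq : MulAut.conj (tmul c g v) = rho c ((c.actG g) v * v⁻¹) :=
    MulEquiv.toMonoidHom_injective hmon
  show MulAut.conj (tmul c g v) = rho c (phiH c (tmul c g v))
  rw [phiH_tmul, hEq]

lemma kerG_le_center : (phiG c).ker ≤ Subgroup.center (NATensor c) := by
  intro k hk
  rw [Subgroup.mem_center_iff]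
  intro s
  have h2 : k * s * k⁻¹ = s := by
    have h1 : MulAut.conj k = chi c (phiG c k) :=
      DFunLike.congr_fun (conj_eq_chi_phiG c) k
    calc k * s * k⁻¹ = MulAut.conj k s := (MulAut.conj_apply k s).symm
      _ = chi c (phiG c k) s := by rw [h1]
      _ = s := by rw [MonoidHom.mem_ker.mp hk, map_one, MulAut.one_apply]
  have h3 : k * s = s * k := by
    conv_rhs => rw [← h2]
    group
  exact h3.symm

lemma kerH_le_center : (phiH c).ker ≤ Subgroup.center (NATensor c) := by
  intro k hk
  rw [Subgroup.mem_center_iff]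
  intro s
  have h2 : k * s * k⁻¹ = s := by
    have h1 : MulAut.conj k = rho c (phiH c k) :=
      DFunLike.congr_fun (conj_eq_rho_phiH c) k
    calc k * s * k⁻¹ = MulAut.conj k s := (MulAut.conj_apply k s).symm
      _ = rho c (phiH c k) s := by rw [h1]
      _ = s := by rw [MonoidHom.mem_ker.mp hk, map_one, MulAut.one_apply]
  have h3 : k * s = s * k := by
    conv_rhs => rw [← h2]
    group
  exact h3.symm

end Part5
end NATensorAux
namespace NATensorAux
section Part6
variable {T X : Type u} [Group T] [Group X]

lemma finite_quotient_comap (f : T →* X) (S : Subgroup X) [S.Normal]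
    [hfin : Finite (X ⧸ S)] :
    haveI : (S.comap f).Normal := S.normal_comap f
    Finite (T ⧸ S.comap f) := by
  haveI : (S.comap f).Normal := S.normal_comap f
  let q := (QuotientGroup.mk' S).comp f
  have hker : q.ker = S.comap f := by
    rw [← MonoidHom.comap_ker, QuotientGroup.ker_mk']
  haveI : Finite q.range := Subtype.finite
  exact Finite.of_equiv q.range
    ((QuotientGroup.quotientKerEquivRange q).symm.trans
      (QuotientGroup.quotientMulEquivOfEq hker)).toEquiv

lemma restrict_ker_le_center (f : T →* X) (hc : f.ker ≤ Subgroup.center T)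
    (S : Subgroup X) :
    ((f.domRestrict (S.comap f)).codRestrict S (fun n => n.2)).ker
      ≤ Subgroup.center ↥(S.comap f) := by
  intro n hn
  have hfn : f (n : T) = 1 := by
    have h1 := MonoidHom.mem_ker.mp hn
    rw [Subtype.ext_iff] at h1
    exact h1
  have hcent : (n : T) ∈ Subgroup.center T := hc (MonoidHom.mem_ker.mpr hfn)
  rw [Subgroup.mem_center_iff]
  intro m
  exact Subtype.ext (Subgroup.mem_center_iff.mp hcent (m : T))

lemma solvableByFinite_of_central_ker (f : T →* X) (hc : f.ker ≤ Subgroup.center T)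
    (hX : SolvableByFinite X) : SolvableByFinite T := by
  obtain ⟨S, hSn, hSsolv, hSfin⟩ := hX
  haveI : S.Normal := hSn
  haveI : Finite (X ⧸ S) := hSfin
  refine ⟨S.comap f, S.normal_comap f, ?_, finite_quotient_comap f S⟩
  let g : ↥(S.comap f) →* ↥S := (f.domRestrict (S.comap f)).codRestrict S (fun n => n.2)
  haveI : IsSolvable ↥S := hSsolv
  haveI : IsSolvable ↥g.ker := by
    apply isSolvable_of_comm
    intro a b
    have hcent := restrict_ker_le_center f hc S a.2
    exact Subtype.ext (Subgroup.mem_center_iff.mp hcent (b : ↥(S.comap f))).symm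
  exact solvable_of_ker_le_range g.ker.subtype g (le_of_eq g.ker.range_subtype.symm)
      (hG' := ‹IsSolvable ↥g.ker›) (hG'' := hSsolv)

lemma nilpotentByFinite_of_central_ker (f : T →* X) (hc : f.ker ≤ Subgroup.center T)
    (hX : NilpotentByFinite X) : NilpotentByFinite T := by
  obtain ⟨S, hSn, hSnil, hSfin⟩ := hX
  haveI : S.Normal := hSn
  haveI : Finite (X ⧸ S) := hSfin
  refine ⟨S.comap f, S.normal_comap f, ?_, finite_quotient_comap f S⟩
  let g : ↥(S.comap f) →* ↥S := (f.domRestrict (S.comap f)).codRestrict S (fun n => n.2)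
  haveI : Group.IsNilpotent ↥S := hSnil
  exact isNilpotent_of_ker_le_center g (restrict_ker_le_center f hc S)

end Part6
end NATensorAux

/-- if one of `G`, `H` is solvable-by-finite (resp. nilpotent-by-finite),
then so is `G ⊗ H`. -/
theorem tensor_solvableByFinite_and_nilpotentByFinite {G H : Type u} [Group G] [Group H]
    (c : CompatibleActions G H) :
    ((SolvableByFinite G ∨ SolvableByFinite H) → SolvableByFinite (NATensor c)) ∧
    ((NilpotentByFinite G ∨ NilpotentByFinite H) → NilpotentByFinite (NATensor c)) := by
  constructor
  · rintro (hG | hH)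
    · exact NATensorAux.solvableByFinite_of_central_ker (NATensorAux.phiG c)
        (NATensorAux.kerG_le_center c) hG
    · exact NATensorAux.solvableByFinite_of_central_ker (NATensorAux.phiH c)
        (NATensorAux.kerH_le_center c) hH
  · rintro (hG | hH)
    · exact NATensorAux.nilpotentByFinite_of_central_ker (NATensorAux.phiG c)
        (NATensorAux.kerG_le_center c) hG
    · exact NATensorAux.nilpotentByFinite_of_central_ker (NATensorAux.phiH c)
        (NATensorAux.kerH_le_center c) hH
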